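/- arXiv:gr-qc/0405102 — 3 statements merged into one kernel-verified Lean document; each statement's English description precedes it below -/
import Mathlib

section
/- For real constants α ≤ β, the functions a(t) = (α - t)^(-1/3)(β - t) and b(t) = (α - t)^(2/3), defined for t < α, satisfy the Bianchi I dust equations 2·b''/b + (b')²/b² = 0 and b''/b + a'b'/(ab) + a''/a = 0. -/
/-! In the variable `x = α - t` the scale factors are `x ^ (2/3)` and `x ^ (-1/3) * (β - t)`, and
the first two derivatives of `x ^ p` and `x ^ p * (β - t)` are again sums of such terms. Writing
`x ^ (p - 1) = x ^ p / x` and `x ^ (2/3) = x ^ (-1/3) * x`, both field equations become rational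
identities in `x ^ (-1/3)`, `x` and `β - t`. -/

open Real Filter Topology

lemma deriv_deriv_eq_of_eventually_hasDerivAt {f f' : ℝ → ℝ} {f'' t : ℝ}
    (hf : ∀ᶠ s in 𝓝 t, HasDerivAt f (f' s) s) (hf' : HasDerivAt f' f'' t) :
    deriv (deriv f) t = f'' := by
  rw [EventuallyEq.deriv_eq (hf.mono fun s hs => hs.deriv)]
  exact hf'.deriv

section PowerOfDistance

variable {α t : ℝ}

lemma hasDerivAt_const_sub_rpow (p : ℝ) (ht : t < α) :
    HasDerivAt (fun s => (α - s) ^ p) (-p * (α - t) ^ (p - 1)) t := by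
  have h := ((hasDerivAt_id' t).const_sub α).rpow_const (p := p) (Or.inl (sub_ne_zero.2 ht.ne'))
  exact h.congr_deriv (by ring)

lemma deriv_deriv_const_sub_rpow (p : ℝ) (ht : t < α) :
    deriv (deriv fun s => (α - s) ^ p) t = p * (p - 1) * (α - t) ^ (p - 1 - 1) := by
  refine deriv_deriv_eq_of_eventually_hasDerivAt
    (eventually_of_mem (Iio_mem_nhds ht) fun s hs => hasDerivAt_const_sub_rpow p hs) ?_
  exact ((hasDerivAt_const_sub_rpow (p - 1) ht).const_mul (-p)).congr_deriv (by ring)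

lemma hasDerivAt_const_sub_rpow_mul_sub (p β : ℝ) (ht : t < α) :
    HasDerivAt (fun s => (α - s) ^ p * (β - s))
      (-p * (α - t) ^ (p - 1) * (β - t) - (α - t) ^ p) t := by
  have h := (hasDerivAt_const_sub_rpow p ht).mul ((hasDerivAt_id' t).const_sub β)
  exact h.congr_deriv (by ring)

lemma deriv_deriv_const_sub_rpow_mul_sub (p β : ℝ) (ht : t < α) :
    deriv (deriv fun s => (α - s) ^ p * (β - s)) t =
      p * (p - 1) * (α - t) ^ (p - 1 - 1) * (β - t) + 2 * p * (α - t) ^ (p - 1) := by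
  refine deriv_deriv_eq_of_eventually_hasDerivAt
    (eventually_of_mem (Iio_mem_nhds ht) fun s hs => hasDerivAt_const_sub_rpow_mul_sub p β hs) ?_
  have h := (((hasDerivAt_const_sub_rpow (p - 1) ht).const_mul (-p)).mul
    ((hasDerivAt_id' t).const_sub β)).sub (hasDerivAt_const_sub_rpow p ht)
  exact h.congr_deriv (by ring)

end PowerOfDistance

/-- The Bianchi I functions a = (α - t)^(-1/3)(β - t), b = (α - t)^(2/3)
satisfy the dust field equations for t < α. -/
theorem bianchiI_dust_solution (α β : ℝ) (hαβ : α ≤ β) (a b : ℝ → ℝ)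
    (ha : ∀ t, a t = (α - t) ^ (-(1 : ℝ) / 3) * (β - t))
    (hb : ∀ t, b t = (α - t) ^ ((2 : ℝ) / 3)) :
    ∀ t < α,
      2 * deriv (deriv b) t / b t + (deriv b t) ^ 2 / (b t) ^ 2 = 0 ∧
      deriv (deriv b) t / b t + deriv a t * deriv b t / (a t * b t)
        + deriv (deriv a) t / a t = 0 := by
  obtain rfl : a = _ := funext ha
  obtain rfl : b = _ := funext hb
  intro t ht
  have hx : α - t ≠ 0 := sub_ne_zero.2 ht.ne'
  have hy : β - t ≠ 0 := sub_ne_zero.2 (ht.trans_le hαβ).ne'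
  rw [(hasDerivAt_const_sub_rpow _ ht).deriv, deriv_deriv_const_sub_rpow _ ht,
    (hasDerivAt_const_sub_rpow_mul_sub _ β ht).deriv, deriv_deriv_const_sub_rpow_mul_sub _ β ht]
  simp only [rpow_sub_one hx]
  rw [show (2 : ℝ) / 3 = -1 / 3 + 1 by norm_num, rpow_add_one hx]
  constructor <;> field_simp <;> ring
end

section
/- The function μ(t) = k/(α - t)² solves the ODE μ'' - (4/μ)(μ')² + 8(α - t)μμ' - μ²/2 - 6(α - t)²μ³ = 0 on t < α if and only if k = 5/4 or k = 4/3. -/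
/-! For `μ = k/(α - t)²` every term of the equation is a multiple of `k/(α - t)⁴`, and the
left-hand side collapses to `-(k / (2(α - t)⁴)) (4k - 5)(3k - 4)`. -/

theorem hasDerivAt_const_div_sub_pow (c α : ℝ) (n : ℕ) {t : ℝ} (ht : t ≠ α) :
    HasDerivAt (fun s => c / (α - s) ^ n) (n * c / (α - t) ^ (n + 1)) t := by
  have hne : α - t ≠ 0 := sub_ne_zero.mpr ht.symm
  have hpow : HasDerivAt (fun s => (α - s) ^ n) (n * (α - t) ^ (n - 1) * (-1)) t := by
    simpa using ((hasDerivAt_id t).const_sub α).fun_pow n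
  refine ((hasDerivAt_const t c).fun_div hpow (pow_ne_zero n hne)).congr_deriv ?_
  rcases n with _ | n
  · simp
  · rw [Nat.add_sub_cancel]
    field_simp
    ring

theorem deriv_const_div_sub_pow (c α : ℝ) (n : ℕ) {t : ℝ} (ht : t ≠ α) :
    deriv (fun s => c / (α - s) ^ n) t = n * c / (α - t) ^ (n + 1) :=
  (hasDerivAt_const_div_sub_pow c α n ht).deriv

theorem deriv_deriv_const_div_sub_sq (c α : ℝ) {t : ℝ} (ht : t ≠ α) :
    deriv (deriv fun s => c / (α - s) ^ 2) t = 6 * c / (α - t) ^ 4 := by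
  have hderiv : deriv (fun s => c / (α - s) ^ 2) =ᶠ[nhds t] fun s => (2 * c) / (α - s) ^ 3 := by
    filter_upwards [isOpen_ne.mem_nhds ht] with s hs
    rw [deriv_const_div_sub_pow c α 2 hs]
    norm_num
  rw [hderiv.deriv_eq, deriv_const_div_sub_pow (2 * c) α 3 ht]
  ring

noncomputable def maartensNelLHS (α : ℝ) (μ : ℝ → ℝ) (t : ℝ) : ℝ :=
  deriv (deriv μ) t - (4 / μ t) * (deriv μ t) ^ 2
    + 8 * (α - t) * μ t * deriv μ t - (μ t) ^ 2 / 2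
    - 6 * (α - t) ^ 2 * (μ t) ^ 3

theorem maartensNelLHS_const_div_sub_sq {α k t : ℝ} (hk : k ≠ 0) (ht : t ≠ α) :
    maartensNelLHS α (fun s => k / (α - s) ^ 2) t
      = -(k / (2 * (α - t) ^ 4)) * ((4 * k - 5) * (3 * k - 4)) := by
  have hne : α - t ≠ 0 := sub_ne_zero.mpr ht.symm
  rw [maartensNelLHS, deriv_deriv_const_div_sub_sq k α ht, deriv_const_div_sub_pow k α 2 ht]
  field_simp
  ring

/-- μ(t) = k/(α - t)² solves the Maartens–Nel ODE on t < α iff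
k = 5/4 or k = 4/3. -/
theorem maartens_nel_particular_solutions (α k : ℝ) (hk : 0 < k) (μ : ℝ → ℝ)
    (hμ : ∀ t, μ t = k / (α - t) ^ 2) :
    (∀ t < α,
      deriv (deriv μ) t - (4 / μ t) * (deriv μ t) ^ 2
        + 8 * (α - t) * μ t * deriv μ t - (μ t) ^ 2 / 2
        - 6 * (α - t) ^ 2 * (μ t) ^ 3 = 0)
    ↔ (k = 5 / 4 ∨ k = 4 / 3) := by
  obtain rfl : μ = fun s => k / (α - s) ^ 2 := funext hμ
  change (∀ t < α, maartensNelLHS α _ t = 0) ↔ _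
  have hprefactor : ∀ t < α, k / (2 * (α - t) ^ 4) ≠ 0 := fun t ht =>
    div_ne_zero hk.ne' (by have := sub_pos.mpr ht; positivity)
  have hroots : (4 * k - 5) * (3 * k - 4) = 0 ↔ k = 5 / 4 ∨ k = 4 / 3 := by
    rw [mul_eq_zero, sub_eq_zero, sub_eq_zero]
    constructor <;> rintro (h | h) <;> [left; right; left; right] <;> linarith
  rw [← hroots]
  constructor
  · intro h
    have hα := h (α - 1) (by linarith)
    rw [maartensNelLHS_const_div_sub_sq hk.ne' (by linarith), neg_mul, neg_eq_zero] at hα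
    exact (mul_eq_zero.mp hα).resolve_left (hprefactor _ (by linarith))
  · intro h t ht
    rw [maartensNelLHS_const_div_sub_sq hk.ne' ht.ne, h, mul_zero]
end

section
/- Under the parametric substitution dt = 2b dη with b(η) = C₁cos²η and a(η) = [M(η sin η + cos η) + C₀ sin η]/cos η, the functions a, b satisfy the Bianchi III (k = 1) dust equation 2b_tt/b + (b_t/b)² + 1/b² = 0, where t-derivatives are computed via d/dt = (1/(2b))·d/dη. -/
/-! With `b = C₁ cos² η` one gets `b_t = b' / (2b) = -tan η` and `b_tt = -sec² η / (2b)`, so after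
multiplying by `C₁² cos⁶ η` the dust equation becomes `sin² η + cos² η - 1 = 0`. -/

open Real

/-- The time derivative `d/dt = (1 / (2b)) d/dη` of the parametrisation `dt = 2b dη`. -/
noncomputable def timeDeriv (b f : ℝ → ℝ) (η : ℝ) : ℝ :=
  1 / (2 * b η) * deriv f η

theorem hasDerivAt_const_mul_cos_sq (c x : ℝ) :
    HasDerivAt (fun s => c * cos s ^ 2) (-2 * c * cos x * sin x) x :=
  (((hasDerivAt_cos x).fun_pow 2).const_mul c).congr_deriv (by ring)

section CosSq

variable {C₁ : ℝ}

/-- At the zeros of `cos` both sides vanish, through `1 / 0 = 0` on the left and `tan = sin / cos`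
on the right. -/
theorem timeDeriv_const_mul_cos_sq (hC₁ : C₁ ≠ 0) :
    timeDeriv (fun s => C₁ * cos s ^ 2) (fun s => C₁ * cos s ^ 2) = fun s => -tan s := by
  funext s
  rw [timeDeriv, (hasDerivAt_const_mul_cos_sq C₁ s).deriv, tan_eq_sin_div_cos]
  by_cases hc : cos s = 0
  · simp [hc]
  · field_simp

theorem timeDeriv_timeDeriv_const_mul_cos_sq (hC₁ : C₁ ≠ 0) {η : ℝ} (hη : cos η ≠ 0) :
    timeDeriv (fun s => C₁ * cos s ^ 2)
        (timeDeriv (fun s => C₁ * cos s ^ 2) (fun s => C₁ * cos s ^ 2)) η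
      = -1 / (2 * C₁ * cos η ^ 4) := by
  have hderiv : deriv (fun s => -tan s) η = -(1 / cos η ^ 2) := (hasDerivAt_tan hη).neg.deriv
  rw [timeDeriv_const_mul_cos_sq hC₁, timeDeriv, hderiv]
  field_simp

theorem bianchiIII_dust_equation_of_eq_const_mul_cos_sq {b : ℝ → ℝ} (hC₁ : C₁ ≠ 0)
    (hb : b = fun s => C₁ * cos s ^ 2) {η : ℝ} (hη : cos η ≠ 0) :
    2 * timeDeriv b (timeDeriv b b) η / b η + (timeDeriv b b η / b η) ^ 2 + 1 / b η ^ 2 = 0 := by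
  subst hb
  rw [timeDeriv_timeDeriv_const_mul_cos_sq hC₁ hη, timeDeriv_const_mul_cos_sq hC₁]
  simp only [tan_eq_sin_div_cos]
  field_simp
  linear_combination sin_sq_add_cos_sq η

end CosSq

theorem bianchiIII_parametric_solution_general (C₁ : ℝ) (hC₁ : 0 < C₁)
    (b : ℝ → ℝ)
    (hb : ∀ η, b η = C₁ * Real.cos η ^ 2) :
    ∀ η : ℝ, Real.cos η ≠ 0 →
      2 * ((1 / (2 * b η)) * deriv (fun s => (1 / (2 * b s)) * deriv b s) η) / b η
        + ((1 / (2 * b η)) * deriv b η / b η) ^ 2 + 1 / (b η) ^ 2 = 0 := by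
  intro η hη
  exact bianchiIII_dust_equation_of_eq_const_mul_cos_sq hC₁.ne' (funext hb) hη

/-- the parametric Bianchi III (k = 1) solution satisfies the dust
equation 2 b_tt/b + (b_t/b)² + 1/b² = 0, with d/dt = (1/(2b)) d/dη. -/
theorem bianchiIII_parametric_solution (M C₀ C₁ : ℝ) (hM : 0 < M) (hC₁ : 0 < C₁)
    (a b : ℝ → ℝ)
    (ha : ∀ η, Real.cos η ≠ 0 →
      a η = (M * (η * Real.sin η + Real.cos η) + C₀ * Real.sin η) / Real.cos η)
    (hb : ∀ η, b η = C₁ * Real.cos η ^ 2) :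
    ∀ η : ℝ, Real.cos η ≠ 0 →
      2 * ((1 / (2 * b η)) * deriv (fun s => (1 / (2 * b s)) * deriv b s) η) / b η
        + ((1 / (2 * b η)) * deriv b η / b η) ^ 2 + 1 / (b η) ^ 2 = 0 :=
  bianchiIII_parametric_solution_general C₁ hC₁ b hb
end
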